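/- Let f be a monotone submodular set function on a finite ground set U, X* a fixed set (an optimal solution) and X any set. Then f(X*) ≤ f(X) + r·δ, where δ = max over x ∈ X*\X of (f(X∪{x}) − f(X)) and r = |X*|, assuming X*\X is nonempty (or δ ≥ 0 when X* ⊆ X). -/

import Mathlib

/-! Adding the elements of `X* \ X` to `X` one at a time, submodularity bounds each gain by the
marginal gain of that element at `X`, hence by `δ`; monotonicity gives `f X* ≤ f (X ∪ X*)`. -/

open Finset

section

variable {U : Type*} [DecidableEq U]

theorem le_add_sum_marginal_of_submodular {f : Finset U → ℝ}
    (hsub : ∀ A B : Finset U, f (A ∪ B) + f (A ∩ B) ≤ f A + f B) (X S : Finset U) :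
    f (X ∪ S) ≤ f X + ∑ x ∈ S, (f (insert x X) - f X) := by
  induction S using Finset.induction_on with
  | empty => simp
  | insert a S ha ih =>
    have hunion : (X ∪ S) ∪ insert a X = X ∪ insert a S := by
      ext; simp only [mem_union, mem_insert]; tauto
    have hinter : (X ∪ S) ∩ insert a X = X := by
      ext y; simp only [mem_inter, mem_union, mem_insert]
      constructor
      · rintro ⟨hy | hy, rfl | hy'⟩ <;> first | assumption | exact absurd hy ha
      · exact fun hy => ⟨.inl hy, .inr hy⟩
    have hstep := hsub (X ∪ S) (insert a X)
    rw [hunion, hinter] at hstep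
    rw [sum_insert ha]
    linarith

theorem sum_le_card_mul_sup' {ι : Type*} (s : Finset ι) (hs : s.Nonempty) (g : ι → ℝ) :
    ∑ i ∈ s, g i ≤ s.card * s.sup' hs g := by
  simpa using sum_le_card_nsmul s g _ fun i hi => le_sup' g hi

end

theorem monotone_submodular_max_marginal_bound_general
    {U : Type*} [DecidableEq U] (f : Finset U → ℝ)
    (hmono : ∀ A B : Finset U, A ⊆ B → f A ≤ f B)
    (hsub : ∀ A B : Finset U, f (A ∪ B) + f (A ∩ B) ≤ f A + f B)
    (X Xstar : Finset U) (hne : (Xstar \ X).Nonempty) :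
    f Xstar ≤ f X + (Xstar.card : ℝ) *
      ((Xstar \ X).sup' hne (fun x => f (insert x X) - f X)) := by
  set δ := (Xstar \ X).sup' hne (fun x => f (insert x X) - f X)
  have hδ : 0 ≤ δ := by
    obtain ⟨x, hx⟩ := hne
    exact (sub_nonneg.2 (hmono _ _ (subset_insert x X))).trans
      (le_sup' (fun x => f (insert x X) - f X) hx)
  calc f Xstar ≤ f (X ∪ (Xstar \ X)) :=
        hmono _ _ (by rw [union_sdiff_self_eq_union]; exact subset_union_right)
    _ ≤ f X + ∑ x ∈ Xstar \ X, (f (insert x X) - f X) :=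
        le_add_sum_marginal_of_submodular hsub X _
    _ ≤ f X + (Xstar \ X).card * δ := by grw [sum_le_card_mul_sup' _ hne]
    _ ≤ f X + Xstar.card * δ := by
      gcongr
      exact sdiff_subset

theorem monotone_submodular_max_marginal_bound
    {U : Type*} [DecidableEq U] [Fintype U] (f : Finset U → ℝ)
    (hmono : ∀ A B : Finset U, A ⊆ B → f A ≤ f B)
    (hsub : ∀ A B : Finset U, f (A ∪ B) + f (A ∩ B) ≤ f A + f B)
    (X Xstar : Finset U) (hne : (Xstar \ X).Nonempty) :
    f Xstar ≤ f X + (Xstar.card : ℝ) *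
      ((Xstar \ X).sup' hne (fun x => f (insert x X) - f X)) :=
  monotone_submodular_max_marginal_bound_general f hmono hsub X Xstar hne
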